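/- arXiv:1907.07158 — 2 statements merged into one kernel-verified Lean document; each statement's English description precedes it below -/
import Mathlib

section
/- Let V be a Weibull random variable with scale c > 0 and shape k > 0, let a > 0, let 0 < V_ci < V_r < V_co, let P_r = a·V_r³, and let P_w = a·V³ if V_ci < V ≤ V_r, P_w = P_r if V_r < V ≤ V_co, and P_w = 0 otherwise. Then for every p with a·V_ci³ ≤ p < a·V_r³, the CDF of the harvested wind power satisfies P(P_w ≤ p) = 1 + exp(−(V_co/c)^k) − exp(−p^{k/3}/(a^{k/3}·c^k)); moreover P(P_w ≤ p) = 1 for every p ≥ P_r. (CDF of the harvested wind power.) -/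
/-! Since `v ↦ a v³` is increasing, writing `p = a v₀³` with `V_ci ≤ v₀ < V_r`, the event
`{P_w ≤ p}` is `{V ≤ v₀} ∪ {V > V_co}`, while `P_w ≤ P_r` always. The Weibull survival function
is `P(V > t) = exp(−(t/c)^k)`, because `−exp(−(v/c)^k)` is an antiderivative of the density that
vanishes at infinity; finally `(v₀/c)^k = p^{k/3}/(a^{k/3} c^k)`. -/

open MeasureTheory Real

/-- Weibull density with scale `c > 0` and shape `k > 0` (zero for `v ≤ 0`). -/
noncomputable def weibullDensity (c k v : ℝ) : ℝ :=
  if 0 < v then (k / c) * (v / c) ^ (k - 1) * Real.exp (-(v / c) ^ k) else 0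

/-- Harvested wind power: `a·V³` on `(V_ci, V_r]`, the rated power `P_r = a·V_r³`
on `(V_r, V_co]`, and `0` otherwise. -/
noncomputable def windPower (a Vci Vr Vco v : ℝ) : ℝ :=
  if Vci < v ∧ v ≤ Vr then a * v ^ 3
  else if Vr < v ∧ v ≤ Vco then a * Vr ^ 3
  else 0

open Filter Topology Set

section Weibull

variable {c k : ℝ}

lemma weibullDensity_nonneg (hc : 0 ≤ c) (hk : 0 ≤ k) (v : ℝ) : 0 ≤ weibullDensity c k v := by
  unfold weibullDensity
  split_ifs with hv
  · have : 0 ≤ (v / c) ^ (k - 1) := rpow_nonneg (div_nonneg hv.le hc) _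
    positivity
  · exact le_rfl

lemma hasDerivAt_neg_exp_neg_div_rpow (hc : c ≠ 0) {x : ℝ} (hx : 0 < x) :
    HasDerivAt (fun v => -exp (-(v / c) ^ k)) (weibullDensity c k x) x := by
  have hpow : HasDerivAt (fun v => (v / c) ^ k) (1 / c * k * (x / c) ^ (k - 1)) x :=
    ((hasDerivAt_id' x).div_const c).rpow_const (Or.inl (div_ne_zero hx.ne' hc))
  refine hpow.neg.exp.neg.congr_deriv ?_
  rw [weibullDensity, if_pos hx, Pi.neg_apply]
  ring

lemma lintegral_weibullDensity_Ioi (hc : 0 < c) (hk : 0 < k) {t : ℝ} (ht : 0 ≤ t) :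
    ∫⁻ v in Ioi t, ENNReal.ofReal (weibullDensity c k v) = ENNReal.ofReal (exp (-(t / c) ^ k)) := by
  have hcont : ContinuousWithinAt (fun v => -exp (-(v / c) ^ k)) (Ici t) t :=
    ((continuousAt_rpow_const _ _ (Or.inr hk.le)).comp
      (continuousAt_id.div_const c)).neg.rexp.neg.continuousWithinAt
  have hderiv : ∀ x ∈ Ioi t, HasDerivAt (fun v => -exp (-(v / c) ^ k)) (weibullDensity c k x) x :=
    fun x hx => hasDerivAt_neg_exp_neg_div_rpow hc.ne' (ht.trans_lt hx)
  have hnonneg : ∀ x ∈ Ioi t, 0 ≤ weibullDensity c k x :=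
    fun x _ => weibullDensity_nonneg hc.le hk.le x
  have hlim : Tendsto (fun v => -exp (-(v / c) ^ k)) atTop (𝓝 0) := by
    simpa using (tendsto_exp_neg_atTop_nhds_zero.comp
      ((tendsto_rpow_atTop hk).comp (tendsto_id.atTop_div_const hc))).neg
  rw [← ofReal_integral_eq_lintegral_ofReal
      (integrableOn_Ioi_deriv_of_nonneg hcont hderiv hnonneg hlim)
      (ae_restrict_of_forall_mem measurableSet_Ioi hnonneg),
    integral_Ioi_of_hasDerivAt_of_nonneg hcont hderiv hnonneg hlim, zero_sub, neg_neg]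

end Weibull

lemma measureReal_preimage_Ioi_eq_exp {Ω : Type*} [MeasurableSpace Ω] {μ : Measure Ω}
    {c k : ℝ} (hc : 0 < c) (hk : 0 < k) {V : Ω → ℝ} (hV : Measurable V)
    (hlaw : μ.map V = volume.withDensity fun v => ENNReal.ofReal (weibullDensity c k v))
    {t : ℝ} (ht : 0 ≤ t) :
    μ.real (V ⁻¹' Ioi t) = exp (-(t / c) ^ k) := by
  rw [← map_measureReal_apply hV measurableSet_Ioi, hlaw, measureReal_def,
    withDensity_apply _ measurableSet_Ioi, lintegral_weibullDensity_Ioi hc hk ht,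
    ENNReal.toReal_ofReal (exp_nonneg _)]

lemma mul_pow_three_le_mul_pow_three_iff {R : Type*} [Ring R] [LinearOrder R]
    [IsStrictOrderedRing R] {a x y : R} (ha : 0 < a) : a * x ^ 3 ≤ a * y ^ 3 ↔ x ≤ y := by
  rw [mul_le_mul_iff_right₀ ha]
  exact (Odd.strictMono_pow (by decide)).le_iff_le

lemma mul_pow_three_lt_mul_pow_three_iff {R : Type*} [Ring R] [LinearOrder R]
    [IsStrictOrderedRing R] {a x y : R} (ha : 0 < a) : a * x ^ 3 < a * y ^ 3 ↔ x < y := by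
  rw [mul_lt_mul_iff_right₀ ha]
  exact (Odd.strictMono_pow (by decide)).lt_iff_lt

lemma mul_pow_three_rpow_div_three_div {a v c k : ℝ} (ha : 0 < a) (hv : 0 ≤ v) (hc : 0 ≤ c) :
    (a * v ^ 3) ^ (k / 3) / (a ^ (k / 3) * c ^ k) = (v / c) ^ k := by
  have hv3 : (v ^ 3) ^ (k / 3) = v ^ k := by
    rw [← rpow_natCast, ← rpow_mul hv]
    congr 1
    push_cast
    ring
  rw [mul_rpow ha.le (by positivity), hv3, div_rpow hv hc,
    mul_div_mul_left _ _ (rpow_pos_of_pos ha _).ne']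

section WindPower

variable {a Vci Vr Vco : ℝ}

lemma windPower_le_rated (ha : 0 ≤ a) (hVr : 0 ≤ Vr) (v : ℝ) :
    windPower a Vci Vr Vco v ≤ a * Vr ^ 3 := by
  unfold windPower
  split_ifs with h
  · exact mul_le_mul_of_nonneg_left ((Odd.strictMono_pow (by decide)).monotone h.2) ha
  · exact le_rfl
  · positivity

lemma windPower_le_mul_pow_three_iff (ha : 0 < a) {v₀ : ℝ} (hv₀ : 0 ≤ v₀) (hVci : Vci ≤ v₀)
    (hv₀Vr : v₀ < Vr) (hVco : Vr < Vco) (v : ℝ) :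
    windPower a Vci Vr Vco v ≤ a * v₀ ^ 3 ↔ v ≤ v₀ ∨ Vco < v := by
  unfold windPower
  split_ifs with hlow hrated
  · rw [mul_pow_three_le_mul_pow_three_iff ha, or_iff_left (by linarith [hlow.2])]
  · refine iff_of_false (not_le.2 ((mul_pow_three_lt_mul_pow_three_iff ha).2 hv₀Vr)) ?_
    rintro (h | h) <;> linarith [hrated.1, hrated.2]
  · exact iff_of_true (by positivity) (by grind)

end WindPower

/-- **CDF of the harvested wind power.**
For `a·V_ci³ ≤ p < a·V_r³`,
`P(P_w ≤ p) = 1 + exp(−(V_co/c)^k) − exp(−p^{k/3}/(a^{k/3}·c^k))`,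
and `P(P_w ≤ p) = 1` for `p ≥ P_r = a·V_r³`. -/
theorem wind_power_cdf
    {Ω : Type*} [MeasurableSpace Ω] (μ : Measure Ω) [IsProbabilityMeasure μ]
    (c k a Vci Vr Vco : ℝ) (hc : 0 < c) (hk : 0 < k) (ha : 0 < a)
    (hVci : 0 < Vci) (hVr : Vci < Vr) (hVco : Vr < Vco)
    (V : Ω → ℝ) (hV : Measurable V)
    (hlaw : μ.map V = volume.withDensity fun v => ENNReal.ofReal (weibullDensity c k v)) :
    (∀ p : ℝ, a * Vci ^ 3 ≤ p → p < a * Vr ^ 3 →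
      (μ {ω | windPower a Vci Vr Vco (V ω) ≤ p}).toReal =
        1 + Real.exp (-(Vco / c) ^ k)
          - Real.exp (-p ^ (k / 3) / (a ^ (k / 3) * c ^ k))) ∧
    (∀ p : ℝ, a * Vr ^ 3 ≤ p →
      (μ {ω | windPower a Vci Vr Vco (V ω) ≤ p}).toReal = 1) := by
  have hVr₀ : 0 < Vr := hVci.trans hVr
  have hsurvival : ∀ t, 0 ≤ t → μ.real (V ⁻¹' Ioi t) = exp (-(t / c) ^ k) :=
    fun t ht => measureReal_preimage_Ioi_eq_exp hc hk hV hlaw ht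
  refine ⟨fun p hp₁ hp₂ => ?_, fun p hp => ?_⟩
  · obtain ⟨v₀, hv₀, rfl⟩ : ∃ v₀, 0 ≤ v₀ ∧ p = a * v₀ ^ 3 := by
      have hp : 0 ≤ p := le_trans (by positivity) hp₁
      refine ⟨(p / a) ^ ((3 : ℕ)⁻¹ : ℝ), by positivity, ?_⟩
      rw [rpow_inv_natCast_pow (div_nonneg hp ha.le) three_ne_zero, mul_div_cancel₀ _ ha.ne']
    have hv₀Vr : v₀ < Vr := (mul_pow_three_lt_mul_pow_three_iff ha).1 hp₂
    have hset : {ω | windPower a Vci Vr Vco (V ω) ≤ a * v₀ ^ 3} =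
        V ⁻¹' Iic v₀ ∪ V ⁻¹' Ioi Vco := by
      ext ω
      exact windPower_le_mul_pow_three_iff ha hv₀ ((mul_pow_three_le_mul_pow_three_iff ha).1 hp₁)
        hv₀Vr hVco (V ω)
    have hdisj : Disjoint (V ⁻¹' Iic v₀) (V ⁻¹' Ioi Vco) :=
      (Iic_disjoint_Ioi (hv₀Vr.trans hVco).le).preimage V
    rw [← measureReal_def, hset, measureReal_union hdisj (hV measurableSet_Ioi), ← compl_Ioi,
      preimage_compl, probReal_compl_eq_one_sub (hV measurableSet_Ioi), hsurvival _ hv₀,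
      hsurvival _ (hVr₀.trans hVco).le, neg_div, mul_pow_three_rpow_div_three_div ha hv₀ hc.le]
    ring
  · have hset : {ω | windPower a Vci Vr Vco (V ω) ≤ p} = univ :=
      eq_univ_of_forall fun ω => (windPower_le_rated ha.le hVr₀.le (V ω)).trans hp
    rw [← measureReal_def, hset, probReal_univ]
end

section
/- Let I be a real random variable with Gaussian density f_I(x) = (1/√(2π))·exp(−(x − I_d)²/2), and let g(x) = (η_c/K_c)·x² for 0 < x < K_c and g(x) = η_c·x for x ≥ K_c. Set τ = 1 + erf((I_d − K_c)/√2) and ν = τ − 1 − erf(I_d/√2). Then the mean harvested solar power satisfies E[g(I)·1_{I>0}] = (1/2)·η_c·I_d·τ − I_d·η_c·(exp(−(I_d − K_c)²/2) − exp(−I_d²/2))/(√(2π)·K_c) − (1/2)·(η_c/K_c)·(1 + I_d²)·ν. (Corollary 1: mean harvested solar power.) -/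
open MeasureTheory Real

/-- Gaussian density with mean `Id` and unit variance. -/
noncomputable def gaussianDensity (Id x : ℝ) : ℝ :=
  (1 / Real.sqrt (2 * Real.pi)) * Real.exp (-(x - Id) ^ 2 / 2)

/-- The error function `erf(x) = (2/√π)·∫₀ˣ e^{−t²} dt`. -/
noncomputable def erf (x : ℝ) : ℝ :=
  (2 / Real.sqrt Real.pi) * ∫ t in (0 : ℝ)..x, Real.exp (-t ^ 2)

/-!
Transport the integral to the real line through the law of `I`, split `(0, ∞)` at `K_c`, and
integrate in closed form: with `f` the Gaussian density and `Φ` its distribution function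
`(1 + erf((y - I_d)/√2))/2`, one has `f' = -(y - I_d) f`, hence the primitives
`y f = (-f + I_d Φ)'` and `y² f = (-(y + I_d) f + (1 + I_d²) Φ)'`.
-/

open Filter Set Topology

lemma hasDerivAt_erf (x : ℝ) : HasDerivAt erf (2 / √π * exp (-x ^ 2)) x :=
  ((by fun_prop : Continuous fun t : ℝ => exp (-t ^ 2)).integral_hasStrictDerivAt 0 x)
    |>.hasDerivAt.const_mul _

lemma erf_neg (x : ℝ) : erf (-x) = -erf x := by
  have h := intervalIntegral.integral_comp_neg (a := 0) (b := -x) fun t : ℝ => exp (-t ^ 2)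
  simp only [neg_neg, neg_sq, neg_zero] at h
  rw [erf, erf, h, intervalIntegral.integral_symm]
  ring

lemma tendsto_erf_atTop : Tendsto erf atTop (𝓝 1) := by
  have hint : IntegrableOn (fun t : ℝ => exp (-t ^ 2)) (Ioi 0) := by
    simpa using (integrable_exp_neg_mul_sq one_pos).integrableOn (s := Ioi 0)
  have hval : ∫ t in Ioi (0 : ℝ), exp (-t ^ 2) = √π / 2 := by
    simpa using integral_gaussian_Ioi 1
  have h := (intervalIntegral_tendsto_integral_Ioi 0 hint tendsto_id).const_mul (2 / √π)
  rwa [hval, div_mul_div_cancel₀ (sqrt_pos.mpr pi_pos).ne', div_self two_ne_zero] at h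

noncomputable def gaussianCDF (m y : ℝ) : ℝ := (1 + erf ((y - m) / √2)) / 2

lemma gaussianCDF_eq_one_sub_erf (m y : ℝ) :
    gaussianCDF m y = (1 - erf ((m - y) / √2)) / 2 := by
  rw [gaussianCDF, ← neg_sub m y, neg_div, erf_neg, ← sub_eq_add_neg]

lemma continuous_gaussianDensity (m : ℝ) : Continuous (gaussianDensity m) := by
  unfold gaussianDensity; fun_prop

lemma gaussianDensity_nonneg (m x : ℝ) : 0 ≤ gaussianDensity m x := by
  unfold gaussianDensity; positivity

lemma hasDerivAt_gaussianDensity (m x : ℝ) :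
    HasDerivAt (gaussianDensity m) (-(x - m) * gaussianDensity m x) x := by
  have hv : HasDerivAt (fun y : ℝ => -(y - m) ^ 2 / 2) (-(x - m)) x := by
    refine (((hasDerivAt_id x).sub_const m).pow 2).neg.div_const 2 |>.congr_deriv ?_
    simp only [id_eq]
    ring
  refine hv.exp.const_mul (1 / √(2 * π)) |>.congr_deriv ?_
  rw [gaussianDensity]
  ring

lemma tendsto_gaussianDensity_atTop (m : ℝ) : Tendsto (gaussianDensity m) atTop (𝓝 0) := by
  have h : Tendsto (fun x : ℝ => -(x - m) ^ 2 / 2) atTop atBot := by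
    simp_rw [neg_div]
    exact tendsto_neg_atTop_atBot.comp <| (tendsto_pow_atTop two_ne_zero).comp
      (tendsto_atTop_add_const_right _ (-m) tendsto_id) |>.atTop_div_const two_pos
  have h' := (tendsto_exp_atBot.comp h).const_mul (1 / √(2 * π))
  rwa [mul_zero] at h'

lemma hasDerivAt_gaussianCDF (m x : ℝ) :
    HasDerivAt (gaussianCDF m) (gaussianDensity m x) x := by
  have hu : HasDerivAt (fun y : ℝ => (y - m) / √2) (1 / √2) x := by
    simpa using ((hasDerivAt_id x).sub_const m).div_const √2
  refine (((hasDerivAt_erf _).comp x hu).const_add 1).div_const 2 |>.congr_deriv ?_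
  have hsq : ((x - m) / √2) ^ 2 = (x - m) ^ 2 / 2 := by
    rw [div_pow, sq_sqrt zero_le_two]
  rw [hsq, gaussianDensity, sqrt_mul zero_le_two, neg_div]
  field_simp

lemma tendsto_gaussianCDF_atTop (m : ℝ) : Tendsto (gaussianCDF m) atTop (𝓝 1) := by
  have h : Tendsto (fun y : ℝ => (y - m) / √2) atTop atTop :=
    (tendsto_atTop_add_const_right _ (-m) tendsto_id).atTop_div_const (sqrt_pos.mpr two_pos)
  have h1 := ((tendsto_erf_atTop.comp h).const_add 1).div_const 2
  rwa [add_self_div_two] at h1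

lemma hasDerivAt_firstMomentPrimitive (m x : ℝ) :
    HasDerivAt (fun y => -gaussianDensity m y + m * gaussianCDF m y)
      (x * gaussianDensity m x) x := by
  refine (hasDerivAt_gaussianDensity m x).neg.add ((hasDerivAt_gaussianCDF m x).const_mul m)
    |>.congr_deriv ?_
  ring

lemma hasDerivAt_secondMomentPrimitive (m x : ℝ) :
    HasDerivAt (fun y => -((y + m) * gaussianDensity m y) + (1 + m ^ 2) * gaussianCDF m y)
      (x ^ 2 * gaussianDensity m x) x := by
  refine (((hasDerivAt_id x).add_const m).mul (hasDerivAt_gaussianDensity m x)).neg.add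
    ((hasDerivAt_gaussianCDF m x).const_mul (1 + m ^ 2)) |>.congr_deriv ?_
  simp only [id_eq]
  ring

lemma tendsto_firstMomentPrimitive_atTop (m : ℝ) :
    Tendsto (fun y => -gaussianDensity m y + m * gaussianCDF m y) atTop (𝓝 m) := by
  simpa using (tendsto_gaussianDensity_atTop m).neg.add ((tendsto_gaussianCDF_atTop m).const_mul m)

section FirstMoment

variable (m : ℝ) {a : ℝ}

lemma integrableOn_Ioi_mul_gaussianDensity (ha : 0 ≤ a) :
    IntegrableOn (fun x => x * gaussianDensity m x) (Ioi a) :=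
  integrableOn_Ioi_deriv_of_nonneg' (fun x _ => hasDerivAt_firstMomentPrimitive m x)
    (fun x hx => mul_nonneg (ha.trans hx.out.le) (gaussianDensity_nonneg m x))
    (tendsto_firstMomentPrimitive_atTop m)

lemma integral_Ioi_mul_gaussianDensity (ha : 0 ≤ a) :
    ∫ x in Ioi a, x * gaussianDensity m x = gaussianDensity m a + m * (1 - gaussianCDF m a) := by
  rw [integral_Ioi_of_hasDerivAt_of_nonneg' (fun x _ => hasDerivAt_firstMomentPrimitive m x)
    (fun x hx => mul_nonneg (ha.trans hx.out.le) (gaussianDensity_nonneg m x))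
    (tendsto_firstMomentPrimitive_atTop m)]
  ring

end FirstMoment

lemma integral_sq_mul_gaussianDensity (m a b : ℝ) :
    ∫ x in a..b, x ^ 2 * gaussianDensity m x =
      (a + m) * gaussianDensity m a - (b + m) * gaussianDensity m b
        + (1 + m ^ 2) * (gaussianCDF m b - gaussianCDF m a) := by
  rw [intervalIntegral.integral_eq_sub_of_hasDerivAt
    (fun x _ => hasDerivAt_secondMomentPrimitive m x)
    (((continuous_pow 2).mul (continuous_gaussianDensity m)).intervalIntegrable _ _)]
  ring

lemma setIntegral_comp_eq_setIntegral_density {α Ω E : Type*} [MeasurableSpace α]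
    [MeasurableSpace Ω] [NormedAddCommGroup E] [NormedSpace ℝ E] {μ : Measure Ω} {ν : Measure α}
    {X : Ω → α} (hX : Measurable X) {f : α → ℝ} (hf : Measurable f) (hf0 : ∀ x, 0 ≤ f x)
    (hlaw : μ.map X = ν.withDensity fun x => ENNReal.ofReal (f x))
    {h : α → E} (hh : StronglyMeasurable h) {s : Set α} (hs : MeasurableSet s) :
    ∫ ω in X ⁻¹' s, h (X ω) ∂μ = ∫ x in s, f x • h x ∂ν := by
  rw [← setIntegral_map hs hh.aestronglyMeasurable hX.aemeasurable, hlaw,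
    setIntegral_withDensity_eq_setIntegral_toReal_smul hf.ennreal_ofReal
      (ae_of_all _ fun _ => ENNReal.ofReal_lt_top) _ hs]
  simp only [ENNReal.toReal_ofReal (hf0 _)]

noncomputable def harvestedPower (η K x : ℝ) : ℝ := if x ≤ K then η / K * x ^ 2 else η * x

lemma measurable_harvestedPower (η K : ℝ) : Measurable (harvestedPower η K) :=
  Measurable.ite measurableSet_Iic (by fun_prop) (by fun_prop)

lemma integral_Ioi_zero_gaussianDensity_mul_harvestedPower (m η : ℝ) {K : ℝ} (hK : 0 ≤ K) :
    ∫ x in Ioi 0, gaussianDensity m x * harvestedPower η K x =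
      η / K * (∫ x in 0..K, x ^ 2 * gaussianDensity m x)
        + η * ∫ x in Ioi K, x * gaussianDensity m x := by
  have hlow : EqOn (fun x => gaussianDensity m x * harvestedPower η K x)
      (fun x => η / K * (x ^ 2 * gaussianDensity m x)) (Ioc 0 K) := fun x hx => by
    simp only [harvestedPower, if_pos hx.2]
    ring
  have hhigh : EqOn (fun x => gaussianDensity m x * harvestedPower η K x)
      (fun x => η * (x * gaussianDensity m x)) (Ioi K) := fun x hx => by
    simp only [harvestedPower, if_neg (not_le.mpr hx.out)]
    ring
  have hint_low : IntegrableOn (fun x => gaussianDensity m x * harvestedPower η K x) (Ioc 0 K) :=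
    (Continuous.integrableOn_Ioc
      (continuous_const.mul ((continuous_pow 2).mul (continuous_gaussianDensity m)))).congr_fun
      hlow.symm measurableSet_Ioc
  have hint_high : IntegrableOn (fun x => gaussianDensity m x * harvestedPower η K x) (Ioi K) :=
    IntegrableOn.congr_fun ((integrableOn_Ioi_mul_gaussianDensity m hK).const_mul η) hhigh.symm
      measurableSet_Ioi
  rw [← Ioc_union_Ioi_eq_Ioi hK, setIntegral_union (Ioc_disjoint_Ioi le_rfl) measurableSet_Ioi
    hint_low hint_high, setIntegral_congr_fun measurableSet_Ioc hlow,
    setIntegral_congr_fun measurableSet_Ioi hhigh, integral_const_mul, integral_const_mul,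
    intervalIntegral.integral_of_le hK]

theorem mean_harvested_solar_power_general
    {Ω : Type*} [MeasurableSpace Ω] (μ : Measure Ω)
    (Id ηc Kc : ℝ) (hKc : 0 < Kc)
    (I : Ω → ℝ) (hI : Measurable I)
    (hlaw : μ.map I = volume.withDensity fun x => ENNReal.ofReal (gaussianDensity Id x))
    (g : ℝ → ℝ)
    (hg₁ : ∀ x : ℝ, 0 < x → x < Kc → g x = (ηc / Kc) * x ^ 2)
    (hg₂ : ∀ x : ℝ, Kc ≤ x → g x = ηc * x)
    (τ ν : ℝ)
    (hτ : τ = 1 + erf ((Id - Kc) / Real.sqrt 2))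
    (hν : ν = τ - 1 - erf (Id / Real.sqrt 2)) :
    ∫ ω in {ω | 0 < I ω}, g (I ω) ∂μ =
      (1 / 2) * ηc * Id * τ
        - Id * ηc * (Real.exp (-(Id - Kc) ^ 2 / 2) - Real.exp (-Id ^ 2 / 2))
            / (Real.sqrt (2 * Real.pi) * Kc)
        - (1 / 2) * (ηc / Kc) * (1 + Id ^ 2) * ν := by
  have hg : EqOn g (harvestedPower ηc Kc) (Ioi 0) := fun x hx => by
    rcases lt_or_ge x Kc with hlt | hge
    · rw [hg₁ x hx hlt, harvestedPower, if_pos hlt.le]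
    · rcases hge.eq_or_lt with rfl | hgt
      · rw [hg₂ _ le_rfl, harvestedPower, if_pos le_rfl]
        field_simp
      · rw [hg₂ x hge, harvestedPower, if_neg (not_le.mpr hgt)]
  calc ∫ ω in {ω | 0 < I ω}, g (I ω) ∂μ
      = ∫ ω in I ⁻¹' Ioi 0, harvestedPower ηc Kc (I ω) ∂μ :=
        setIntegral_congr_fun (hI measurableSet_Ioi) fun ω hω => hg hω
    _ = ∫ x in Ioi 0, gaussianDensity Id x * harvestedPower ηc Kc x :=
        setIntegral_comp_eq_setIntegral_density hI (continuous_gaussianDensity Id).measurable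
          (gaussianDensity_nonneg Id) hlaw (measurable_harvestedPower ηc Kc).stronglyMeasurable
          measurableSet_Ioi
    _ = ηc / Kc * (∫ x in 0..Kc, x ^ 2 * gaussianDensity Id x)
          + ηc * ∫ x in Ioi Kc, x * gaussianDensity Id x :=
        integral_Ioi_zero_gaussianDensity_mul_harvestedPower Id ηc hKc.le
    _ = _ := by
      rw [integral_sq_mul_gaussianDensity, integral_Ioi_mul_gaussianDensity Id hKc.le,
        gaussianCDF_eq_one_sub_erf, gaussianCDF_eq_one_sub_erf, sub_zero, hν, hτ]
      simp only [gaussianDensity, zero_sub, neg_sq, ← neg_sub Kc Id]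
      field_simp
      ring

/-- **Corollary 1 (mean harvested solar power).** With
`τ = 1 + erf((I_d − K_c)/√2)` and `ν = τ − 1 − erf(I_d/√2)`,
`E[g(I)·1_{I>0}] = (1/2)·η_c·I_d·τ
  − I_d·η_c·(exp(−(I_d−K_c)²/2) − exp(−I_d²/2))/(√(2π)·K_c)
  − (1/2)·(η_c/K_c)·(1+I_d²)·ν`. -/
theorem mean_harvested_solar_power
    {Ω : Type*} [MeasurableSpace Ω] (μ : Measure Ω) [IsProbabilityMeasure μ]
    (Id ηc Kc : ℝ) (hId : 0 < Id) (hηc : 0 < ηc) (hKc : 0 < Kc)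
    (I : Ω → ℝ) (hI : Measurable I)
    (hlaw : μ.map I = volume.withDensity fun x => ENNReal.ofReal (gaussianDensity Id x))
    (g : ℝ → ℝ)
    (hg₁ : ∀ x : ℝ, 0 < x → x < Kc → g x = (ηc / Kc) * x ^ 2)
    (hg₂ : ∀ x : ℝ, Kc ≤ x → g x = ηc * x)
    (τ ν : ℝ)
    (hτ : τ = 1 + erf ((Id - Kc) / Real.sqrt 2))
    (hν : ν = τ - 1 - erf (Id / Real.sqrt 2)) :
    ∫ ω in {ω | 0 < I ω}, g (I ω) ∂μ =
      (1 / 2) * ηc * Id * τ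
        - Id * ηc * (Real.exp (-(Id - Kc) ^ 2 / 2) - Real.exp (-Id ^ 2 / 2))
            / (Real.sqrt (2 * Real.pi) * Kc)
        - (1 / 2) * (ηc / Kc) * (1 + Id ^ 2) * ν :=
  mean_harvested_solar_power_general μ Id ηc Kc hKc I hI hlaw g hg₁ hg₂ τ ν hτ hν
end
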